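/- Let R be a non-integer real number with R > 0, let m be a natural number, and let x > 0 be real. Then, along the coupled sequence h = x/N, the Grünwald–Letnikov derivative of order R of the power function x^m recovers its Riemann–Liouville derivative: lim_{N→∞} (x/N)^{-R} ∑_{k=0}^{N} (-1)^k C(R,k) (x - k·x/N)^m = Γ(m+1)/Γ(m-R+1) · x^{m-R}. -/

import Mathlib

open Finset Filter Real

/-- Generalized binomial coefficient C(R,k) = R(R-1)⋯(R-k+1)/k! for real R and natural k. -/
noncomputable def genBinom (R : ℝ) (k : ℕ) : ℝ :=
  (∏ i ∈ Finset.range k, (R - i)) / (Nat.factorial k)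

/-!
Since `x - k x/N = (x/N)(N - k)`, the sum is `(x/N)^m ∑ₖ (-1)^k C(R,k) (N-k)^m`. Expanding
`j^m = ∑ᵢ S(m,i) i! C(j,i)` with Stirling numbers of the second kind reduces it to the
convolutions `∑ₖ (-1)^k C(R,k) C(N-k,i)`, the coefficients of `tᴺ` in `tⁱ (1-t)^(R-i-1)`,
hence equal to `(-1)^(N-i) C(R-i-1, N-i) = (i+1-R)_(N-i) / (N-i)!`. By Euler's limit formula
for `Γ` this rising factorial behaves like `N^(i-R) / Γ(i+1-R)`, so after scaling by `N^(R-m)`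
only the top term `i = m` survives and leaves `m! / Γ(m+1-R)`.
-/

open Topology

theorem genBinom_zero (R : ℝ) : genBinom R 0 = 1 := by simp [genBinom]

theorem genBinom_succ (R : ℝ) (k : ℕ) :
    genBinom R (k + 1) = genBinom (R - 1) (k + 1) + genBinom (R - 1) k := by
  have hk : (k.factorial : ℝ) ≠ 0 := mod_cast k.factorial_ne_zero
  have hshift (i : ℕ) : R - ((i + 1 : ℕ) : ℝ) = R - 1 - i := by push_cast; ring
  simp only [genBinom, prod_range_succ' (fun i : ℕ => R - i), hshift, prod_range_succ,
    Nat.factorial_succ]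
  push_cast
  field_simp
  ring

theorem neg_one_pow_mul_genBinom (a : ℝ) (n : ℕ) :
    (-1) ^ n * genBinom a n = (∏ j ∈ range n, (-a + j)) / n.factorial := by
  have hsign : (-1 : ℝ) ^ n = ∏ _j ∈ range n, (-1 : ℝ) := by simp
  rw [genBinom, hsign, ← mul_div_assoc, ← prod_mul_distrib]
  congr 1
  exact prod_congr rfl fun j _ => by ring

noncomputable def altBinomConv (R : ℝ) (i N : ℕ) : ℝ :=
  ∑ k ∈ range (N + 1), (-1) ^ k * genBinom R k * ((N - k).choose i : ℝ)

theorem altBinomConv_succ_succ (R : ℝ) (i N : ℕ) :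
    altBinomConv R (i + 1) (N + 1) = altBinomConv R (i + 1) N + altBinomConv R i N := by
  rw [altBinomConv, sum_range_succ, Nat.sub_self, Nat.choose_zero_succ, Nat.cast_zero, mul_zero,
    add_zero, altBinomConv, altBinomConv, ← sum_add_distrib]
  refine sum_congr rfl fun k hk => ?_
  rw [Nat.sub_add_comm (mem_range_succ_iff.1 hk), Nat.choose_succ_succ, Nat.cast_add]
  ring

theorem altBinomConv_zero_left (R : ℝ) (N : ℕ) :
    altBinomConv R 0 N = (-1) ^ N * genBinom (R - 1) N := by
  induction N with
  | zero => simp [altBinomConv, genBinom]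
  | succ N ih =>
    simp only [altBinomConv, Nat.choose_zero_right, Nat.cast_one, mul_one] at ih ⊢
    rw [sum_range_succ, ih, genBinom_succ]
    ring

theorem altBinomConv_self (R : ℝ) (i : ℕ) : altBinomConv R i i = 1 := by
  rw [altBinomConv, sum_range_succ', sum_eq_zero fun k hk => ?_]
  · simp [genBinom]
  · rw [Nat.choose_eq_zero_of_lt (by have := mem_range.1 hk; omega), Nat.cast_zero, mul_zero]

theorem altBinomConv_add (R : ℝ) (i n : ℕ) :
    altBinomConv R i (i + n) = (-1) ^ n * genBinom (R - i - 1) n := by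
  induction i generalizing n with
  | zero => simpa using altBinomConv_zero_left R n
  | succ i ih =>
    induction n with
    | zero => simpa [genBinom_zero] using altBinomConv_self R (i + 1)
    | succ n ihn =>
      have hshift : R - i - 1 = (R - (i + 1 : ℕ) - 1) + 1 := by push_cast; ring
      rw [← add_assoc, altBinomConv_succ_succ, ihn, add_right_comm, add_assoc, ih, hshift,
        genBinom_succ (R - (i + 1 : ℕ) - 1 + 1), add_sub_cancel_right]
      ring

theorem Nat.mul_descFactorial_eq_descFactorial_succ_add (j i : ℕ) :
    j * j.descFactorial i = j.descFactorial (i + 1) + i * j.descFactorial i := by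
  rcases le_or_gt i j with h | h
  · rw [Nat.descFactorial_succ, ← add_mul, Nat.sub_add_cancel h]
  · simp [Nat.descFactorial_eq_zero_iff_lt.2 h]

theorem Nat.pow_eq_sum_stirlingSecond_mul_descFactorial (m j : ℕ) :
    j ^ m = ∑ i ∈ range (m + 1), m.stirlingSecond i * j.descFactorial i := by
  induction m with
  | zero => simp
  | succ m ih =>
    have hshift :
        ∑ i ∈ range (m + 1), (i + 1) * m.stirlingSecond (i + 1) * j.descFactorial (i + 1)
          = ∑ i ∈ range (m + 1), i * m.stirlingSecond i * j.descFactorial i := by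
      have h1 := sum_range_succ' (fun i => i * m.stirlingSecond i * j.descFactorial i) (m + 1)
      have h2 := sum_range_succ (fun i => i * m.stirlingSecond i * j.descFactorial i) (m + 1)
      simp only [Nat.stirlingSecond_eq_zero_of_lt m.lt_succ_self, mul_zero, zero_mul,
        add_zero] at h1 h2
      omega
    calc j ^ (m + 1)
        = ∑ i ∈ range (m + 1), m.stirlingSecond i * (j * j.descFactorial i) := by
          rw [pow_succ, ih, sum_mul]
          exact sum_congr rfl fun i _ => by ring
      _ = ∑ i ∈ range (m + 1), m.stirlingSecond i * j.descFactorial (i + 1)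
          + ∑ i ∈ range (m + 1),
              (i + 1) * m.stirlingSecond (i + 1) * j.descFactorial (i + 1) := by
          rw [hshift, ← sum_add_distrib]
          refine sum_congr rfl fun i _ => ?_
          rw [Nat.mul_descFactorial_eq_descFactorial_succ_add]
          ring
      _ = ∑ i ∈ range (m + 2), (m + 1).stirlingSecond i * j.descFactorial i := by
          rw [sum_range_succ' _ (m + 1), ← sum_add_distrib]
          simp only [Nat.stirlingSecond_succ_succ, Nat.stirlingSecond_succ_zero, zero_mul,
            add_zero]
          exact sum_congr rfl fun i _ => by ring

theorem sum_alt_genBinom_mul_pow (R : ℝ) (m N : ℕ) :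
    ∑ k ∈ range (N + 1), (-1) ^ k * genBinom R k * ((N : ℝ) - k) ^ m
      = ∑ i ∈ range (m + 1), (m.stirlingSecond i * i.factorial : ℝ) * altBinomConv R i N := by
  have hpow : ∀ k ∈ range (N + 1), ((N : ℝ) - k) ^ m
      = ∑ i ∈ range (m + 1), (m.stirlingSecond i * i.factorial : ℝ) * (N - k).choose i := by
    intro k hk
    rw [← Nat.cast_sub (mem_range_succ_iff.1 hk), ← Nat.cast_pow,
      Nat.pow_eq_sum_stirlingSecond_mul_descFactorial]
    push_cast [Nat.descFactorial_eq_factorial_mul_choose]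
    exact sum_congr rfl fun i _ => by ring
  simp only [altBinomConv, mul_sum]
  rw [sum_congr rfl fun k hk => by rw [hpow k hk, mul_sum], sum_comm]
  exact sum_congr rfl fun i _ => sum_congr rfl fun k _ => by ring

theorem tendsto_rpow_mul_prod_add_div_factorial {s : ℝ} (hs : ∀ n : ℕ, s ≠ -n) :
    Tendsto (fun n : ℕ => (n : ℝ) ^ (1 - s) * ((∏ j ∈ range n, (s + j)) / n.factorial))
      atTop (𝓝 (Gamma s)⁻¹) := by
  have hlim := ((tendsto_natCast_div_add_atTop s).mul
    ((GammaSeq_tendsto_Gamma s).inv₀ (Gamma_ne_zero hs)))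
  rw [one_mul] at hlim
  refine hlim.congr' ?_
  filter_upwards [eventually_gt_atTop 0] with n hn
  have hn : (0 : ℝ) < n := Nat.cast_pos.2 hn
  have hsn : (n : ℝ) + s ≠ 0 := fun h => hs n (by linarith)
  have hfac : (n.factorial : ℝ) ≠ 0 := mod_cast n.factorial_ne_zero
  rw [GammaSeq, prod_range_succ, rpow_sub hn, rpow_one]
  field_simp
  ring

theorem Filter.Tendsto.natCast_rpow_mul_comp_sub {f : ℕ → ℝ} {p L : ℝ}
    (hf : Tendsto (fun n : ℕ => (n : ℝ) ^ p * f n) atTop (𝓝 L)) (i : ℕ) :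
    Tendsto (fun n : ℕ => (n : ℝ) ^ p * f (n - i)) atTop (𝓝 L) := by
  have hratio : Tendsto (fun n : ℕ => (((n : ℝ) / (n + i))⁻¹) ^ p) atTop (𝓝 1) := by
    simpa using ((tendsto_natCast_div_add_atTop (i : ℝ)).inv₀ one_ne_zero).rpow_const
      (Or.inl (by norm_num))
  have hlim := (hratio.comp (tendsto_sub_atTop_nat i)).mul (hf.comp (tendsto_sub_atTop_nat i))
  rw [one_mul] at hlim
  refine hlim.congr' ?_
  filter_upwards [eventually_gt_atTop i] with n hn
  have hni : (0 : ℝ) < (n : ℝ) - i := by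
    rw [← Nat.cast_sub hn.le]; exact Nat.cast_pos.2 (Nat.sub_pos_of_lt hn)
  simp only [Function.comp_apply, Nat.cast_sub hn.le, sub_add_cancel, inv_div]
  rw [div_rpow (Nat.cast_nonneg n) hni.le, ← mul_assoc,
    div_mul_cancel₀ _ (rpow_pos_of_pos hni p).ne']

theorem altBinomConv_eq_prod (R : ℝ) {i N : ℕ} (h : i ≤ N) :
    altBinomConv R i N = (∏ j ∈ range (N - i), ((i + 1 - R) + j)) / (N - i).factorial := by
  obtain ⟨n, rfl⟩ := Nat.exists_eq_add_of_le h
  rw [altBinomConv_add, neg_one_pow_mul_genBinom, Nat.add_sub_cancel_left,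
    show -(R - i - 1) = (i : ℝ) + 1 - R by ring]

theorem tendsto_rpow_mul_altBinomConv {R : ℝ} (hR : ∀ n : ℤ, R ≠ n) (i : ℕ) :
    Tendsto (fun N : ℕ => (N : ℝ) ^ (R - i) * altBinomConv R i N) atTop
      (𝓝 (Gamma (i + 1 - R))⁻¹) := by
  have hs : ∀ n : ℕ, (i : ℝ) + 1 - R ≠ -n := fun n h =>
    hR (i + 1 + n) (by push_cast; linarith)
  have hlim := (tendsto_rpow_mul_prod_add_div_factorial hs).natCast_rpow_mul_comp_sub i
  rw [show 1 - ((i : ℝ) + 1 - R) = R - i by ring] at hlim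
  refine hlim.congr' ?_
  filter_upwards [eventually_ge_atTop i] with N hN
  rw [altBinomConv_eq_prod R hN]

theorem tendsto_rpow_mul_altBinomConv_of_lt {R : ℝ} (hR : ∀ n : ℤ, R ≠ n) {i m : ℕ}
    (him : i < m) :
    Tendsto (fun N : ℕ => (N : ℝ) ^ (R - m) * altBinomConv R i N) atTop (𝓝 0) := by
  have hdecay : Tendsto (fun N : ℕ => (N : ℝ) ^ ((i : ℝ) - m)) atTop (𝓝 0) := by
    have h := (tendsto_rpow_neg_atTop (y := m - i) (by simpa using him)).comp
      tendsto_natCast_atTop_atTop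
    rwa [neg_sub] at h
  have hlim := hdecay.mul (tendsto_rpow_mul_altBinomConv hR i)
  rw [zero_mul] at hlim
  refine hlim.congr' ?_
  filter_upwards [eventually_gt_atTop 0] with N hN
  rw [← mul_assoc, ← rpow_add (Nat.cast_pos.2 hN)]
  ring_nf

theorem tendsto_rpow_mul_sum_alt_genBinom_mul_pow {R : ℝ} (hR : ∀ n : ℤ, R ≠ n) (m : ℕ) :
    Tendsto (fun N : ℕ =>
        (N : ℝ) ^ (R - m) *
          ∑ k ∈ range (N + 1), (-1) ^ k * genBinom R k * ((N : ℝ) - k) ^ m)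
      atTop (𝓝 (Gamma (m + 1) / Gamma (m - R + 1))) := by
  simp only [sum_alt_genBinom_mul_pow, sum_range_succ _ m]
  have hlower := tendsto_finsetSum (range m) fun i hi =>
    (tendsto_rpow_mul_altBinomConv_of_lt hR (mem_range.1 hi)).const_mul
      (m.stirlingSecond i * i.factorial : ℝ)
  have htop := (tendsto_rpow_mul_altBinomConv hR m).const_mul (m.factorial : ℝ)
  convert hlower.add htop using 1
  · ext N
    rw [Nat.stirlingSecond_self, mul_add, mul_sum]
    push_cast
    congr 1
    · exact sum_congr rfl fun i _ => by ring
    · ring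
  · rw [Gamma_nat_eq_factorial, add_sub_right_comm]
    simp [div_eq_mul_inv]

theorem coupled_GL_power_principal_value_general (R : ℝ) (hR : ∀ n : ℤ, R ≠ (n : ℝ))
    (m : ℕ) (x : ℝ) (hx : 0 < x) :
    Filter.Tendsto
      (fun N : ℕ =>
        (x / N) ^ (-R) *
          ∑ k ∈ Finset.range (N + 1),
            (-1 : ℝ) ^ k * genBinom R k * (x - k * (x / N)) ^ m)
      Filter.atTop
      (nhds (Real.Gamma ((m : ℝ) + 1) / Real.Gamma ((m : ℝ) - R + 1) * x ^ ((m : ℝ) - R))) := by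
  refine ((tendsto_rpow_mul_sum_alt_genBinom_mul_pow hR m).mul_const
    (x ^ ((m : ℝ) - R))).congr' ?_
  filter_upwards [eventually_gt_atTop 0] with N hN
  replace hN : (0 : ℝ) < N := Nat.cast_pos.2 hN
  have hstep : ∀ k : ℕ, x - k * (x / N) = x / N * (N - k) := fun k => by field_simp
  have hscale : (x / N) ^ (-R) * (x / N) ^ m = (N : ℝ) ^ (R - m) * x ^ ((m : ℝ) - R) := by
    rw [← rpow_natCast, ← rpow_add (div_pos hx hN), div_rpow hx.le hN.le, div_eq_mul_inv,
      ← rpow_neg hN.le]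
    ring_nf
  have hsum : ∑ k ∈ range (N + 1), (-1 : ℝ) ^ k * genBinom R k * (x - k * (x / N)) ^ m
      = (x / N) ^ m * ∑ k ∈ range (N + 1), (-1) ^ k * genBinom R k * ((N : ℝ) - k) ^ m := by
    rw [mul_sum]
    exact sum_congr rfl fun k _ => by rw [hstep, mul_pow]; ring
  rw [hsum, ← mul_assoc, hscale]
  ring

/-- For non-integer R > 0, natural m, and x > 0, the Grünwald–Letnikov derivative of
    order R of x^m along the coupled sequence h = x/N recovers the Riemann–Liouville
    derivative Γ(m+1)/Γ(m-R+1) · x^{m-R}. -/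
theorem coupled_GL_power_principal_value (R : ℝ) (hR : ∀ n : ℤ, R ≠ (n : ℝ)) (hR0 : 0 < R)
    (m : ℕ) (x : ℝ) (hx : 0 < x) :
    Filter.Tendsto
      (fun N : ℕ =>
        (x / N) ^ (-R) *
          ∑ k ∈ Finset.range (N + 1),
            (-1 : ℝ) ^ k * genBinom R k * (x - k * (x / N)) ^ m)
      Filter.atTop
      (nhds (Real.Gamma ((m : ℝ) + 1) / Real.Gamma ((m : ℝ) - R + 1) * x ^ ((m : ℝ) - R))) :=
  coupled_GL_power_principal_value_general R hR m x hx
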